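/- arXiv:1702.07421 — 2 statements merged into one kernel-verified Lean document; each statement's English description precedes it below -/
import Mathlib

section
/- Let n and m be positive integers, C an m×n real matrix, D an invertible m×m real matrix, θ an invertible n×n real matrix, ρ an invertible m×m real matrix, and F_r an n×n real matrix with μ₂(F_r) < 0. Set P = θᵀ·θ, S = ρ·D⁻¹·C·θ⁻¹, σ_max(S) = sup{‖S·v‖₂ : ‖v‖₂ = 1}, η = −μ₂(F_r)/(1 + σ_max(S)²), R = η·D⁻ᵀ·ρᵀ·ρ·D⁻¹·C·P⁻¹, and Q = −η·D⁻ᵀ·ρᵀ. Then the generalized unreduced Jacobian F = [[F_r + θ·Rᵀ·C·θ⁻¹, θ·Rᵀ·D·ρ⁻¹], [Qᵀ·C·θ⁻¹, Qᵀ·D·ρ⁻¹]] satisfies wᵀ·F·w ≤ −η·‖w‖₂² for every w ∈ ℝ^{n+m}; in particular μ₂(F) ≤ −η = μ₂(F_r)/(1 + σ_max(S)²). -/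
open Matrix

/-- The Euclidean (ℓ²) norm of a real vector. -/
noncomputable def l2norm {k : Type*} [Fintype k] (x : k → ℝ) : ℝ :=
  Real.sqrt (∑ i, x i ^ 2)

/-- The 2-norm matrix measure: `μ₂(M) = sup_{‖x‖₂=1} xᵀ M x`. -/
noncomputable def mu2 {k : Type*} [Fintype k] (M : Matrix k k ℝ) : ℝ :=
  sSup ((fun x => x ⬝ᵥ M.mulVec x) '' {x | l2norm x = 1})

/-- `σ_max(S) = sup { ‖S v‖₂ : ‖v‖₂ = 1 }`. -/
noncomputable def sigmaMax {k l : Type*} [Fintype k] [Fintype l]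
    (S : Matrix k l ℝ) : ℝ :=
  sSup ((fun v => l2norm (S.mulVec v)) '' {v | l2norm v = 1})

section aux

variable {k l : Type*} [Fintype k] [Fintype l]

lemma l2norm_nonneg (x : k → ℝ) : 0 ≤ l2norm x := Real.sqrt_nonneg _

lemma l2norm_sq (x : k → ℝ) : l2norm x ^ 2 = ∑ i, x i ^ 2 := by
  rw [l2norm, Real.sq_sqrt]
  exact Finset.sum_nonneg fun i _ => sq_nonneg _

lemma l2norm_smul (a : ℝ) (x : k → ℝ) : l2norm (a • x) = |a| * l2norm x := by
  unfold l2norm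
  have h : ∀ i, (a • x) i ^ 2 = a ^ 2 * x i ^ 2 := fun i => by
    simp [mul_pow]
  simp_rw [h, ← Finset.mul_sum]
  rw [Real.sqrt_mul (sq_nonneg a), Real.sqrt_sq_eq_abs]

lemma abs_le_one_of_unit {x : k → ℝ} (h : l2norm x = 1) (i : k) : |x i| ≤ 1 := by
  have h2 : ∑ j, x j ^ 2 = 1 := by rw [← l2norm_sq, h]; norm_num
  have h3 : x i ^ 2 ≤ 1 := by
    calc x i ^ 2 ≤ ∑ j, x j ^ 2 :=
          Finset.single_le_sum (f := fun j => x j ^ 2) (fun j _ => sq_nonneg _)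
            (Finset.mem_univ i)
    _ = 1 := h2
  nlinarith [abs_nonneg (x i), sq_abs (x i)]

lemma exists_l2_unit [Nonempty k] : ∃ x : k → ℝ, l2norm x = 1 := by
  classical
  obtain ⟨i0⟩ := ‹Nonempty k›
  refine ⟨fun j => if j = i0 then 1 else 0, ?_⟩
  unfold l2norm
  have h : ∀ i, (if i = i0 then (1:ℝ) else 0) ^ 2 = if i = i0 then 1 else 0 := by
    intro i; by_cases hi : i = i0 <;> simp [hi]
  simp only [h, Finset.sum_ite_eq', Finset.mem_univ, if_true, Real.sqrt_one]

lemma mu2_bdd (M : Matrix k k ℝ) :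
    BddAbove ((fun x => x ⬝ᵥ M.mulVec x) '' {x | l2norm x = 1}) := by
  refine ⟨∑ i, ∑ j, |M i j|, ?_⟩
  rintro r ⟨x, hx, rfl⟩
  have hexp : x ⬝ᵥ M.mulVec x = ∑ i, ∑ j, x i * (M i j * x j) := by
    simp [dotProduct, Matrix.mulVec, Finset.mul_sum]
  show x ⬝ᵥ M.mulVec x ≤ _
  rw [hexp]
  refine Finset.sum_le_sum fun i _ => Finset.sum_le_sum fun j _ => ?_
  have h1 := abs_le_one_of_unit hx i
  have h2 := abs_le_one_of_unit hx j
  calc x i * (M i j * x j) ≤ |x i * (M i j * x j)| := le_abs_self _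
  _ = |x i| * |M i j| * |x j| := by rw [abs_mul, abs_mul]; ring
  _ ≤ 1 * |M i j| * 1 := by
      apply mul_le_mul (mul_le_mul h1 le_rfl (abs_nonneg _) zero_le_one) h2
        (abs_nonneg _) (by positivity)
  _ = |M i j| := by ring

lemma quad_le_mu2 (M : Matrix k k ℝ) (x : k → ℝ) :
    x ⬝ᵥ M.mulVec x ≤ mu2 M * ∑ i, x i ^ 2 := by
  by_cases hx : x = 0
  · subst hx; simp
  · have hne : l2norm x ≠ 0 := by
      intro h0
      apply hx
      have hsum : ∑ i, x i ^ 2 = 0 := by rw [← l2norm_sq, h0]; norm_num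
      funext i
      have := (Finset.sum_eq_zero_iff_of_nonneg
        (fun i _ => sq_nonneg (x i))).1 hsum i (Finset.mem_univ i)
      exact (pow_eq_zero_iff two_ne_zero).1 this
    have hpos : 0 < l2norm x := lt_of_le_of_ne (l2norm_nonneg x) (Ne.symm hne)
    set c := l2norm x with hc
    have hu : l2norm (c⁻¹ • x) = 1 := by
      rw [l2norm_smul, abs_of_pos (inv_pos.2 hpos), inv_mul_cancel₀ hpos.ne']
    have hle : (c⁻¹ • x) ⬝ᵥ M.mulVec (c⁻¹ • x) ≤ mu2 M :=
      le_csSup (mu2_bdd M) ⟨_, hu, rfl⟩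
    have hexp : (c⁻¹ • x) ⬝ᵥ M.mulVec (c⁻¹ • x) = c⁻¹ * c⁻¹ * (x ⬝ᵥ M.mulVec x) := by
      rw [Matrix.mulVec_smul, smul_dotProduct, dotProduct_smul]
      simp only [smul_eq_mul]
      ring
    rw [hexp] at hle
    have hkey : x ⬝ᵥ M.mulVec x = c ^ 2 * (c⁻¹ * c⁻¹ * (x ⬝ᵥ M.mulVec x)) := by
      first
      | (field_simp; ring)
      | field_simp
    calc x ⬝ᵥ M.mulVec x = c ^ 2 * (c⁻¹ * c⁻¹ * (x ⬝ᵥ M.mulVec x)) := hkey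
    _ ≤ c ^ 2 * mu2 M := mul_le_mul_of_nonneg_left hle (sq_nonneg c)
    _ = mu2 M * ∑ i, x i ^ 2 := by rw [hc, l2norm_sq]; ring

lemma sigma_bdd (S : Matrix k l ℝ) :
    BddAbove ((fun v => l2norm (S.mulVec v)) '' {v | l2norm v = 1}) := by
  refine ⟨∑ i, ∑ j, |S i j|, ?_⟩
  rintro r ⟨v, hv, rfl⟩
  show l2norm (S.mulVec v) ≤ _
  have hb : ∀ i, |S.mulVec v i| ≤ ∑ j, |S i j| := by
    intro i
    calc |S.mulVec v i| = |∑ j, S i j * v j| := rfl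
    _ ≤ ∑ j, |S i j * v j| := Finset.abs_sum_le_sum_abs _ _
    _ ≤ ∑ j, |S i j| := Finset.sum_le_sum fun j _ => by
        rw [abs_mul]
        exact mul_le_of_le_one_right (abs_nonneg _) (abs_le_one_of_unit hv j)
  have hnn : ∀ i, (0:ℝ) ≤ ∑ j, |S i j| :=
    fun i => Finset.sum_nonneg fun j _ => abs_nonneg _
  calc l2norm (S.mulVec v) ≤ Real.sqrt (∑ i, (∑ j, |S i j|) ^ 2) := by
        apply Real.sqrt_le_sqrt
        refine Finset.sum_le_sum fun i _ => ?_
        rw [← sq_abs]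
        exact pow_le_pow_left₀ (abs_nonneg _) (hb i) 2
  _ ≤ Real.sqrt ((∑ i, ∑ j, |S i j|) ^ 2) := by
        apply Real.sqrt_le_sqrt
        exact Finset.sum_sq_le_sq_sum_of_nonneg fun i _ => hnn i
  _ = ∑ i, ∑ j, |S i j| := Real.sqrt_sq (Finset.sum_nonneg fun i _ => hnn i)

lemma sigma_nonneg [Nonempty l] (S : Matrix k l ℝ) : 0 ≤ sigmaMax S := by
  obtain ⟨v, hv⟩ := exists_l2_unit (k := l)
  exact le_trans (l2norm_nonneg (S.mulVec v)) (le_csSup (sigma_bdd S) ⟨v, hv, rfl⟩)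

lemma mulVec_le_sigma (S : Matrix k l ℝ) (v : l → ℝ) :
    l2norm (S.mulVec v) ≤ sigmaMax S * l2norm v := by
  by_cases hv : v = 0
  · subst hv
    simp [l2norm, Matrix.mulVec_zero]
  · have hne : l2norm v ≠ 0 := by
      intro h0
      apply hv
      have hsum : ∑ i, v i ^ 2 = 0 := by rw [← l2norm_sq, h0]; norm_num
      funext i
      have := (Finset.sum_eq_zero_iff_of_nonneg
        (fun i _ => sq_nonneg (v i))).1 hsum i (Finset.mem_univ i)
      exact (pow_eq_zero_iff two_ne_zero).1 this
    have hpos : 0 < l2norm v := lt_of_le_of_ne (l2norm_nonneg v) (Ne.symm hne)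
    set c := l2norm v with hc
    have hu : l2norm (c⁻¹ • v) = 1 := by
      rw [l2norm_smul, abs_of_pos (inv_pos.2 hpos), inv_mul_cancel₀ hpos.ne']
    have hle : l2norm (S.mulVec (c⁻¹ • v)) ≤ sigmaMax S :=
      le_csSup (sigma_bdd S) ⟨_, hu, rfl⟩
    rw [Matrix.mulVec_smul] at hle
    have hsm : l2norm (c⁻¹ • S.mulVec v) = c⁻¹ * l2norm (S.mulVec v) := by
      rw [l2norm_smul, abs_of_pos (inv_pos.2 hpos)]
    rw [hsm] at hle
    calc l2norm (S.mulVec v) = c * (c⁻¹ * l2norm (S.mulVec v)) := by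
          rw [← mul_assoc, mul_inv_cancel₀ hpos.ne', one_mul]
    _ ≤ c * sigmaMax S := mul_le_mul_of_nonneg_left hle hpos.le
    _ = sigmaMax S * c := mul_comm _ _

lemma sumsq_mulVec_le (S : Matrix k l ℝ) (v : l → ℝ) (hσ : 0 ≤ sigmaMax S) :
    ∑ i, (S.mulVec v) i ^ 2 ≤ sigmaMax S ^ 2 * ∑ j, v j ^ 2 := by
  have h := mulVec_le_sigma S v
  have h2 := pow_le_pow_left₀ (l2norm_nonneg (S.mulVec v)) h 2
  rw [l2norm_sq, mul_pow, l2norm_sq] at h2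
  exact h2

lemma quad_blocks [DecidableEq k] (S : Matrix k l ℝ) (Fr : Matrix l l ℝ) (η : ℝ)
    (x : l → ℝ) (y : k → ℝ) :
    Sum.elim x y ⬝ᵥ (Matrix.fromBlocks (Fr + η • (Sᵀ * S)) (η • Sᵀ)
        ((-η) • S) ((-η) • (1 : Matrix k k ℝ))).mulVec (Sum.elim x y)
      = x ⬝ᵥ Fr.mulVec x + η * (S.mulVec x ⬝ᵥ S.mulVec x) - η * (y ⬝ᵥ y) := by
  rw [Matrix.fromBlocks_mulVec, sumElim_dotProduct_sumElim]
  simp only [Sum.elim_comp_inl, Sum.elim_comp_inr, Matrix.add_mulVec,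
    Matrix.smul_mulVec, Matrix.one_mulVec, dotProduct_add, dotProduct_smul,
    smul_eq_mul]
  have h1 : x ⬝ᵥ (Sᵀ * S).mulVec x = S.mulVec x ⬝ᵥ S.mulVec x := by
    rw [← Matrix.mulVec_mulVec, Matrix.dotProduct_mulVec, Matrix.vecMul_transpose]
  have h2 : x ⬝ᵥ Sᵀ.mulVec y = S.mulVec x ⬝ᵥ y := by
    rw [Matrix.dotProduct_mulVec, Matrix.vecMul_transpose]
  have h3 : y ⬝ᵥ S.mulVec x = S.mulVec x ⬝ᵥ y := dotProduct_comm _ _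
  rw [h1, h2, h3]
  ring

end aux

theorem stmt5 (n m : ℕ) (hn : 0 < n) (hm : 0 < m)
    (C : Matrix (Fin m) (Fin n) ℝ)
    (D : Matrix (Fin m) (Fin m) ℝ) (hD : IsUnit D.det)
    (θ : Matrix (Fin n) (Fin n) ℝ) (hθ : IsUnit θ.det)
    (ρ : Matrix (Fin m) (Fin m) ℝ) (hρ : IsUnit ρ.det)
    (Fr : Matrix (Fin n) (Fin n) ℝ) (hFr : mu2 Fr < 0)
    (P : Matrix (Fin n) (Fin n) ℝ) (hP : P = θᵀ * θ)
    (S : Matrix (Fin m) (Fin n) ℝ) (hS : S = ρ * D⁻¹ * C * θ⁻¹)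
    (η : ℝ) (hη : η = -mu2 Fr / (1 + sigmaMax S ^ 2))
    (R : Matrix (Fin m) (Fin n) ℝ) (hR : R = η • ((D⁻¹)ᵀ * ρᵀ * ρ * D⁻¹ * C * P⁻¹))
    (Q : Matrix (Fin m) (Fin m) ℝ) (hQ : Q = (-η) • ((D⁻¹)ᵀ * ρᵀ))
    (F : Matrix (Fin n ⊕ Fin m) (Fin n ⊕ Fin m) ℝ)
    (hF : F = Matrix.fromBlocks (Fr + θ * Rᵀ * C * θ⁻¹) (θ * Rᵀ * D * ρ⁻¹)
      (Qᵀ * C * θ⁻¹) (Qᵀ * D * ρ⁻¹)) :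
    (∀ w : Fin n ⊕ Fin m → ℝ, w ⬝ᵥ F.mulVec w ≤ -η * ∑ i, w i ^ 2) ∧
      mu2 F ≤ -η ∧ -η = mu2 Fr / (1 + sigmaMax S ^ 2) := by
  haveI : Nonempty (Fin n) := ⟨⟨0, hn⟩⟩
  haveI : Nonempty (Fin m) := ⟨⟨0, hm⟩⟩
  haveI : Nonempty (Fin n ⊕ Fin m) := ⟨Sum.inl ⟨0, hn⟩⟩
  have hσ : 0 ≤ sigmaMax S := sigma_nonneg S
  have hden : (0:ℝ) < 1 + sigmaMax S ^ 2 := by positivity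
  have hηpos : 0 < η := by
    rw [hη]; exact div_pos (by linarith) hden
  have hmu : mu2 Fr = -η * (1 + sigmaMax S ^ 2) := by
    rw [hη]; field_simp
  -- block identities
  have hθT : IsUnit θᵀ.det := by rwa [Matrix.det_transpose]
  have hDT : IsUnit Dᵀ.det := by rwa [Matrix.det_transpose]
  have hA : θ * Rᵀ * C * θ⁻¹ = η • (Sᵀ * S) := by
    rw [hR, hP, hS]
    simp only [Matrix.transpose_smul, Matrix.transpose_mul, Matrix.transpose_transpose,
      Matrix.smul_mul, Matrix.mul_smul, Matrix.transpose_nonsing_inv, Matrix.mul_inv_rev,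
      Matrix.mul_assoc]
    rw [Matrix.mul_nonsing_inv_cancel_left θ _ hθ]
  have hB : θ * Rᵀ * D * ρ⁻¹ = η • Sᵀ := by
    rw [hR, hP, hS]
    simp only [Matrix.transpose_smul, Matrix.transpose_mul, Matrix.transpose_transpose,
      Matrix.smul_mul, Matrix.mul_smul, Matrix.transpose_nonsing_inv, Matrix.mul_inv_rev,
      Matrix.mul_assoc]
    rw [Matrix.mul_nonsing_inv_cancel_left θ _ hθ,
      Matrix.nonsing_inv_mul_cancel_left D _ hD, Matrix.mul_nonsing_inv ρ hρ, mul_one]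
  have hC' : Qᵀ * C * θ⁻¹ = (-η) • S := by
    rw [hQ, hS]
    simp only [Matrix.transpose_smul, Matrix.transpose_mul, Matrix.transpose_transpose,
      Matrix.smul_mul, Matrix.mul_assoc]
  have hD' : Qᵀ * D * ρ⁻¹ = (-η) • (1 : Matrix (Fin m) (Fin m) ℝ) := by
    rw [hQ]
    simp only [Matrix.transpose_smul, Matrix.transpose_mul, Matrix.transpose_transpose,
      Matrix.smul_mul, Matrix.mul_assoc]
    rw [Matrix.nonsing_inv_mul_cancel_left D _ hD, Matrix.mul_nonsing_inv ρ hρ]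
  have hF' : F = Matrix.fromBlocks (Fr + η • (Sᵀ * S)) (η • Sᵀ)
      ((-η) • S) ((-η) • (1 : Matrix (Fin m) (Fin m) ℝ)) := by
    rw [hF, hA, hB, hC', hD']
  -- part 1
  have key : ∀ w : Fin n ⊕ Fin m → ℝ, w ⬝ᵥ F.mulVec w ≤ -η * ∑ i, w i ^ 2 := by
    intro w
    set x : Fin n → ℝ := w ∘ Sum.inl with hx
    set y : Fin m → ℝ := w ∘ Sum.inr with hy
    have hw : w = Sum.elim x y := by
      funext i; cases i <;> rfl
    have hsplit : ∑ i, w i ^ 2 = ∑ i, x i ^ 2 + ∑ j, y j ^ 2 := by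
      rw [Fintype.sum_sum_type]; rfl
    have hq : w ⬝ᵥ F.mulVec w
        = x ⬝ᵥ Fr.mulVec x + η * (S.mulVec x ⬝ᵥ S.mulVec x) - η * (y ⬝ᵥ y) := by
      rw [hw, hF', quad_blocks]
    have hquadFr := quad_le_mu2 Fr x
    have hSx : S.mulVec x ⬝ᵥ S.mulVec x ≤ sigmaMax S ^ 2 * ∑ i, x i ^ 2 := by
      have := sumsq_mulVec_le S x hσ
      calc S.mulVec x ⬝ᵥ S.mulVec x = ∑ i, (S.mulVec x) i ^ 2 := by
            simp [dotProduct, sq]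
      _ ≤ sigmaMax S ^ 2 * ∑ i, x i ^ 2 := this
    have hyy : y ⬝ᵥ y = ∑ j, y j ^ 2 := by simp [dotProduct, sq]
    have hq2 : x ⬝ᵥ Fr.mulVec x
        ≤ -(η * ∑ i, x i ^ 2) - η * (sigmaMax S ^ 2 * ∑ i, x i ^ 2) := by
      calc x ⬝ᵥ Fr.mulVec x ≤ mu2 Fr * ∑ i, x i ^ 2 := hquadFr
      _ = -(η * ∑ i, x i ^ 2) - η * (sigmaMax S ^ 2 * ∑ i, x i ^ 2) := by
          rw [hmu]; ring
    have hSx' : η * (S.mulVec x ⬝ᵥ S.mulVec x)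
        ≤ η * (sigmaMax S ^ 2 * ∑ i, x i ^ 2) :=
      mul_le_mul_of_nonneg_left hSx hηpos.le
    rw [hq, hsplit, hyy]
    ring_nf
    nlinarith [hq2, hSx']
  refine ⟨key, ?_, by rw [hη]; ring⟩
  apply csSup_le
  · obtain ⟨w, hw⟩ := exists_l2_unit (k := Fin n ⊕ Fin m)
    exact ⟨w ⬝ᵥ F.mulVec w, ⟨w, hw, rfl⟩⟩
  · rintro r ⟨w, hw, rfl⟩
    have h1 := key w
    have hsum : ∑ i, w i ^ 2 = 1 := by rw [← l2norm_sq, hw]; norm_num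
    rw [hsum] at h1
    linarith
end

section
/- Let n and m be positive integers, let F_r be an n×n real matrix with a := μ∞(F_r) < 0, let ε ≥ 0, and let S be an m×n real matrix whose every row has absolute row sum at most ε (i.e. Σ_j |S_{ij}| ≤ ε for every i). Then the (n+m)×(n+m) block matrix F = [[F_r, 0], [a·S, a·I_m]] satisfies μ∞(F) ≤ a·(1 − ε) = μ∞(F_r)·(1 − ε). -/
/-!
The zero upper-right block makes the first `n` rows of `F` contribute exactly the row terms of
`F_r`, each at most `a ≤ a (1 - ε)`. A lower row contributes `a + |a| ∑ⱼ |S i j| ≤ a - a ε`,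
since its diagonal entry is `a < 0` and the identity block has no off-diagonal mass.
-/

open Matrix Finset

/-- The ∞-norm matrix measure: `μ∞(M) = max_i ( M i i + ∑_{j ≠ i} |M i j| )`. -/
noncomputable def muInfty {k : Type*} [Fintype k] [DecidableEq k]
    (M : Matrix k k ℝ) : ℝ :=
  ⨆ i, (M i i + ∑ j ∈ Finset.univ.erase i, |M i j|)

section MatrixMeasure

variable {k l : Type*} [Fintype k] [DecidableEq k] [Fintype l] [DecidableEq l]

def muInftyRow (M : Matrix k k ℝ) (i : k) : ℝ :=
  M i i + ∑ j ∈ univ.erase i, |M i j|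

theorem muInftyRow_eq (M : Matrix k k ℝ) (i : k) :
    muInftyRow M i = M i i - |M i i| + ∑ j, |M i j| := by
  rw [muInftyRow, sum_erase_eq_sub (mem_univ i)]
  ring

theorem muInftyRow_le_muInfty (M : Matrix k k ℝ) (i : k) : muInftyRow M i ≤ muInfty M :=
  le_ciSup (Set.finite_range _).bddAbove i

theorem muInfty_le [Nonempty k] {M : Matrix k k ℝ} {c : ℝ} (h : ∀ i, muInftyRow M i ≤ c) :
    muInfty M ≤ c :=
  ciSup_le h

theorem muInftyRow_smul_one (a : ℝ) (i : k) : muInftyRow (a • (1 : Matrix k k ℝ)) i = a := by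
  rw [muInftyRow_eq, Fintype.sum_eq_single i fun j hj => by simp [one_apply_ne' hj]]
  simp

theorem muInftyRow_fromBlocks_inl (A : Matrix k k ℝ) (B : Matrix k l ℝ) (C : Matrix l k ℝ)
    (D : Matrix l l ℝ) (i : k) :
    muInftyRow (fromBlocks A B C D) (Sum.inl i) = muInftyRow A i + ∑ j, |B i j| := by
  rw [muInftyRow_eq, muInftyRow_eq, Fintype.sum_sum_type]
  simp only [fromBlocks_apply₁₁, fromBlocks_apply₁₂]
  ring

theorem muInftyRow_fromBlocks_inr (A : Matrix k k ℝ) (B : Matrix k l ℝ) (C : Matrix l k ℝ)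
    (D : Matrix l l ℝ) (i : l) :
    muInftyRow (fromBlocks A B C D) (Sum.inr i) = muInftyRow D i + ∑ j, |C i j| := by
  rw [muInftyRow_eq, muInftyRow_eq, Fintype.sum_sum_type]
  simp only [fromBlocks_apply₂₁, fromBlocks_apply₂₂]
  ring

theorem muInfty_fromBlocks_le [Nonempty (k ⊕ l)] {A : Matrix k k ℝ} {B : Matrix k l ℝ}
    {C : Matrix l k ℝ} {D : Matrix l l ℝ} {c : ℝ}
    (hA : ∀ i, muInftyRow A i + ∑ j, |B i j| ≤ c)
    (hD : ∀ i, muInftyRow D i + ∑ j, |C i j| ≤ c) :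
    muInfty (fromBlocks A B C D) ≤ c := by
  refine muInfty_le fun i => ?_
  rcases i with i | i
  · simpa only [muInftyRow_fromBlocks_inl] using hA i
  · simpa only [muInftyRow_fromBlocks_inr] using hD i

end MatrixMeasure

theorem stmt7_general (n m : ℕ) (hn : 0 < n)
    (Fr : Matrix (Fin n) (Fin n) ℝ) (a : ℝ) (ha : a = muInfty Fr) (haneg : a < 0)
    (ε : ℝ) (hε : 0 ≤ ε)
    (S : Matrix (Fin m) (Fin n) ℝ) (hS : ∀ i, ∑ j, |S i j| ≤ ε) :
    muInfty (Matrix.fromBlocks Fr 0 (a • S) (a • (1 : Matrix (Fin m) (Fin m) ℝ))) ≤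
      a * (1 - ε) ∧ a * (1 - ε) = muInfty Fr * (1 - ε) := by
  refine ⟨?_, by rw [ha]⟩
  have : Nonempty (Fin n) := ⟨⟨0, hn⟩⟩
  apply muInfty_fromBlocks_le
  · intro i
    have hrow : muInftyRow Fr i ≤ a := ha ▸ muInftyRow_le_muInfty Fr i
    simp only [Matrix.zero_apply, abs_zero, sum_const_zero, add_zero]
    nlinarith
  · intro i
    have hsum : ∑ j, |(a • S) i j| = -a * ∑ j, |S i j| := by
      simp only [Matrix.smul_apply, smul_eq_mul, abs_mul, abs_of_neg haneg, mul_sum]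
    rw [muInftyRow_smul_one, hsum]
    nlinarith [hS i]

theorem stmt7 (n m : ℕ) (hn : 0 < n) (hm : 0 < m)
    (Fr : Matrix (Fin n) (Fin n) ℝ) (a : ℝ) (ha : a = muInfty Fr) (haneg : a < 0)
    (ε : ℝ) (hε : 0 ≤ ε)
    (S : Matrix (Fin m) (Fin n) ℝ) (hS : ∀ i, ∑ j, |S i j| ≤ ε) :
    muInfty (Matrix.fromBlocks Fr 0 (a • S) (a • (1 : Matrix (Fin m) (Fin m) ℝ))) ≤
      a * (1 - ε) ∧ a * (1 - ε) = muInfty Fr * (1 - ε) :=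
  stmt7_general n m hn Fr a ha haneg ε hε S hS
end
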